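/- Suppose (e_t) is a sequence of nonnegative reals (representing E[(x_t - x*)²]) satisfying, for all t ≥ 1, e_t · (∑_{τ<t} e_τ) ≥ σ²/(4a²) with σ, a > 0, and suppose e_t = k² t^{2r} for constants k > 0 and r ∈ ℝ. Then r ≥ -1/4, and if r = -1/4 then k² ≥ σ/(√8 · a), so e_t ≥ (σ/(√8 a)) t^{-1/2}. -/

import Mathlib

open Real Filter Finset

private lemma aux_tele (i : ℕ) :
    ((i : ℝ) + 1) ^ (-(1/2) : ℝ) ≤ 2 * (Real.sqrt ((i : ℝ) + 1) - Real.sqrt i) := by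
  have h0 : (0:ℝ) ≤ i := Nat.cast_nonneg i
  have h1 : (0:ℝ) < (i:ℝ) + 1 := by linarith
  have hs1 : (0:ℝ) < Real.sqrt ((i:ℝ)+1) := Real.sqrt_pos.mpr h1
  have hmul : Real.sqrt (i:ℝ) * Real.sqrt ((i:ℝ)+1) = Real.sqrt ((i:ℝ)*((i:ℝ)+1)) :=
    (Real.sqrt_mul h0 _).symm
  have hle : Real.sqrt ((i:ℝ)*((i:ℝ)+1)) ≤ (i:ℝ) + 1/2 := by
    have := Real.sqrt_le_sqrt (show (i:ℝ)*((i:ℝ)+1) ≤ ((i:ℝ)+1/2)^2 by nlinarith)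
    rwa [Real.sqrt_sq (by linarith)] at this
  have hsq : Real.sqrt ((i:ℝ)+1) * Real.sqrt ((i:ℝ)+1) = (i:ℝ)+1 := Real.mul_self_sqrt h1.le
  have key : 1 ≤ 2 * (Real.sqrt ((i:ℝ)+1) - Real.sqrt i) * Real.sqrt ((i:ℝ)+1) := by nlinarith
  have hrw : ((i:ℝ)+1) ^ (-(1/2) : ℝ) = 1 / Real.sqrt ((i:ℝ)+1) := by
    rw [Real.rpow_neg h1.le, Real.sqrt_eq_rpow, inv_eq_one_div]
  rw [hrw, div_le_iff₀ hs1]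
  linarith

private lemma aux_sum (k r : ℝ) (hr : 2*r ≤ -(1/2)) (t : ℕ) :
    ∑ i ∈ Finset.range t, k^2 * ((i:ℝ)+1) ^ (2*r) ≤ 2*k^2*Real.sqrt t := by
  have step : ∀ i ∈ Finset.range t,
      k^2 * ((i:ℝ)+1) ^ (2*r) ≤ k^2 * (2 * (Real.sqrt ((i:ℝ)+1) - Real.sqrt i)) := by
    intro i _
    have h1 : (1:ℝ) ≤ (i:ℝ)+1 := by
      have : (0:ℝ) ≤ i := Nat.cast_nonneg i; linarith
    have := Real.rpow_le_rpow_of_exponent_le h1 hr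
    have := this.trans (aux_tele i)
    nlinarith [sq_nonneg k, this]
  calc ∑ i ∈ Finset.range t, k^2 * ((i:ℝ)+1) ^ (2*r)
      ≤ ∑ i ∈ Finset.range t, k^2 * (2 * (Real.sqrt ((i:ℝ)+1) - Real.sqrt i)) :=
        Finset.sum_le_sum step
    _ = 2*k^2 * ∑ i ∈ Finset.range t, (Real.sqrt ((i:ℝ)+1) - Real.sqrt i) := by
        rw [Finset.mul_sum]; congr 1; ext i; ring
    _ = 2*k^2 * Real.sqrt t := by
        have : ∑ i ∈ Finset.range t, (Real.sqrt ((i:ℝ)+1) - Real.sqrt i)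
            = Real.sqrt t - Real.sqrt 0 := by
          have := Finset.sum_range_sub (fun n : ℕ => Real.sqrt n) t
          simpa [Nat.cast_add] using this
        rw [this, Real.sqrt_zero, sub_zero]

private lemma aux_nat_rpow_tendsto {p : ℝ} (hp : p < 0) :
    Tendsto (fun t : ℕ => (t:ℝ) ^ p) atTop (nhds 0) := by
  have : Tendsto (fun x : ℝ => x ^ (-(-p))) atTop (nhds 0) :=
    tendsto_rpow_neg_atTop (by linarith)
  simpa [Function.comp_def] using this.comp tendsto_natCast_atTop_atTop

theorem power_law_convergence_bound (σ a k r : ℝ) (hσ : 0 < σ) (ha : 0 < a) (hk : 0 < k)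
    (e : ℕ → ℝ) (henn : ∀ t, 0 ≤ e t)
    (he : ∀ t : ℕ, 1 ≤ t → e t = k ^ 2 * (t : ℝ) ^ (2 * r))
    (hCR : ∀ t : ℕ, 1 ≤ t → e t * ∑ τ ∈ Finset.range t, e τ ≥ σ ^ 2 / (4 * a ^ 2)) :
    r ≥ -1/4 ∧
      (r = -1/4 → k ^ 2 ≥ σ / (Real.sqrt 8 * a) ∧
        ∀ t : ℕ, 1 ≤ t → e t ≥ σ / (Real.sqrt 8 * a) * (t : ℝ) ^ (-(1/2) : ℝ)) := by
  set c := σ ^ 2 / (4 * a ^ 2) with hc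
  have hcpos : 0 < c := by positivity
  -- main bound, valid when 2r ≤ -1/2
  have main : 2*r ≤ -(1/2) → ∀ t : ℕ, 1 ≤ t →
      c ≤ k^2 * (t:ℝ) ^ (2*r) * (e 0 + 2*k^2*Real.sqrt t) := by
    intro hr t ht
    obtain ⟨m, rfl⟩ : ∃ m, t = m + 1 := ⟨t - 1, by omega⟩
    have hsum : ∑ τ ∈ Finset.range (m+1), e τ ≤ e 0 + 2*k^2*Real.sqrt (m+1 : ℕ) := by
      rw [Finset.sum_range_succ']
      have h1 : ∑ i ∈ Finset.range m, e (i+1)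
          = ∑ i ∈ Finset.range m, k^2 * ((i:ℝ)+1) ^ (2*r) := by
        apply Finset.sum_congr rfl
        intro i _
        rw [he (i+1) (by omega)]
        push_cast
        ring_nf
      have h2 := aux_sum k r hr m
      have hmono : Real.sqrt (m : ℝ) ≤ Real.sqrt ((m+1 : ℕ) : ℝ) := by
        apply Real.sqrt_le_sqrt; push_cast; linarith
      have hk2 : (0:ℝ) ≤ 2*k^2 := by positivity
      nlinarith [mul_le_mul_of_nonneg_left hmono hk2]
    have hCRt := hCR (m+1) (by omega)
    rw [he (m+1) (by omega)] at hCRt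
    have hpos : (0:ℝ) ≤ k^2 * ((m+1 : ℕ):ℝ) ^ (2*r) := by positivity
    calc c ≤ k^2 * ((m+1:ℕ):ℝ) ^ (2*r) * ∑ τ ∈ Finset.range (m+1), e τ := hCRt
      _ ≤ k^2 * ((m+1:ℕ):ℝ) ^ (2*r) * (e 0 + 2*k^2*Real.sqrt (m+1:ℕ)) :=
          mul_le_mul_of_nonneg_left hsum hpos
  -- limit form: c ≤ k^2*e0*t^(2r) + 2*k^4*t^(2r+1/2) for t ≥ 1
  have expand : 2*r ≤ -(1/2) → ∀ t : ℕ, 1 ≤ t →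
      c ≤ k^2 * e 0 * (t:ℝ) ^ (2*r) + 2*k^4 * (t:ℝ) ^ (2*r + 1/2) := by
    intro hr t ht
    have h1 : (0:ℝ) < t := by exact_mod_cast ht
    have hsqrt : Real.sqrt t = (t:ℝ) ^ ((1:ℝ)/2) := Real.sqrt_eq_rpow _
    have hadd : (t:ℝ) ^ (2*r) * (t:ℝ) ^ ((1:ℝ)/2) = (t:ℝ) ^ (2*r + 1/2) :=
      (Real.rpow_add h1 _ _).symm
    have := main hr t ht
    calc c ≤ k^2 * (t:ℝ) ^ (2*r) * (e 0 + 2*k^2*Real.sqrt t) := this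
      _ = k^2 * e 0 * (t:ℝ) ^ (2*r) + 2*k^4 * ((t:ℝ) ^ (2*r) * (t:ℝ)^((1:ℝ)/2)) := by
          rw [hsqrt]; ring
      _ = k^2 * e 0 * (t:ℝ) ^ (2*r) + 2*k^4 * (t:ℝ) ^ (2*r + 1/2) := by rw [hadd]
  have hr14 : r ≥ -1/4 := by
    by_contra hlt
    push_neg at hlt
    have hr : 2*r ≤ -(1/2) := by linarith
    have hlim : Tendsto (fun t : ℕ =>
        k^2 * e 0 * (t:ℝ) ^ (2*r) + 2*k^4 * (t:ℝ) ^ (2*r + 1/2)) atTop (nhds 0) := by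
      have l1 := (aux_nat_rpow_tendsto (show 2*r < 0 by linarith)).const_mul (k^2 * e 0)
      have l2 := (aux_nat_rpow_tendsto (show 2*r + 1/2 < 0 by linarith)).const_mul (2*k^4)
      simpa using l1.add l2
    have hle : c ≤ 0 := by
      apply ge_of_tendsto hlim
      filter_upwards [eventually_ge_atTop 1] with t ht
      exact expand hr t ht
    linarith
  refine ⟨hr14, fun hreq => ?_⟩
  have hr : 2*r ≤ -(1/2) := by rw [hreq]; norm_num
  have h2k4 : c ≤ 2*k^4 := by
    have hlim : Tendsto (fun t : ℕ =>
        k^2 * e 0 * (t:ℝ) ^ (2*r) + 2*k^4 * (t:ℝ) ^ (2*r + 1/2)) atTop (nhds (2*k^4)) := by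
      have l1 := (aux_nat_rpow_tendsto (show 2*r < 0 by rw [hreq]; norm_num)).const_mul (k^2 * e 0)
      have hz : 2*r + 1/2 = 0 := by rw [hreq]; norm_num
      have l2 : Tendsto (fun t : ℕ => 2*k^4 * (t:ℝ) ^ (2*r + 1/2)) atTop (nhds (2*k^4)) := by
        rw [hz]
        simpa using tendsto_const_nhds (α := ℝ) (f := atTop (α := ℕ))
      simpa using l1.add l2
    apply ge_of_tendsto hlim
    filter_upwards [eventually_ge_atTop 1] with t ht
    exact expand hr t ht
  have hs8 : (0:ℝ) < Real.sqrt 8 := Real.sqrt_pos.mpr (by norm_num)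
  have hσ2 : σ^2 ≤ 8 * a^2 * k^4 := by
    have h4 : (0:ℝ) < 4*a^2 := by positivity
    rw [hc, div_le_iff₀ h4] at h2k4; nlinarith
  have hk2 : σ / (Real.sqrt 8 * a) ≤ k^2 := by
    rw [div_le_iff₀ (by positivity)]
    nlinarith [hσ2, Real.sq_sqrt (show (0:ℝ) ≤ 8 by norm_num), hs8.le, sq_nonneg k,
      mul_nonneg (mul_nonneg (sq_nonneg k) hs8.le) ha.le]
  refine ⟨hk2, fun t ht => ?_⟩
  have h1 : (0:ℝ) < t := by exact_mod_cast ht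
  rw [he t ht, show 2*r = -(1/2) by rw [hreq]; norm_num]
  have hp : (0:ℝ) ≤ (t:ℝ) ^ (-(1/2) : ℝ) := Real.rpow_nonneg h1.le _
  exact mul_le_mul_of_nonneg_right hk2 hp
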